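/- Let G' be a profinite group, G → G' a homomorphism of an abstract group with dense image, and X_• a simplicial G-set with finitely many G-orbits in each degree. Then the G'-completion X'_• := lim_{λ} X_•/G^λ (limit over subgroups G^λ of G that are preimages of open subgroups of G') is a simplicial profinite set with continuous G'-action, and any G-equivariant simplicial map from X_• to a simplicial profinite set Y_• with continuous geometric G'-action factors uniquely through X_• → X'_• via a continuous G'-equivariant map X'_• → Y_•. -/

import Mathlib

/-- A simplicial `G`-set: a simplicial set `X_•` (faces and degeneracies; the
simplicial identities are not recorded in this model) with a `G`-action by simplicial
automorphisms. -/
structure SimplicialGSet (G : Type) [Group G] where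
  /-- The set of `n`-simplices. -/
  X : ℕ → Type
  /-- The face maps. -/
  face : ∀ n, Fin (n + 2) → X (n + 1) → X n
  /-- The degeneracy maps. -/
  degen : ∀ n, Fin (n + 1) → X n → X (n + 1)
  /-- The `G`-action in each degree. -/
  smul : ∀ n, G → X n → X n
  one_smul : ∀ n x, smul n 1 x = x
  mul_smul : ∀ n g h x, smul n (g * h) x = smul n g (smul n h x)
  face_smul : ∀ n i g x, face n i (smul (n + 1) g x) = smul n g (face n i x)
  degen_smul : ∀ n i g x, degen n i (smul n g x) = smul (n + 1) g (degen n i x)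

/-- A simplicial profinite set with a continuous geometric action of a topological
group `G'`: each set of `n`-simplices is a profinite space (compact, Hausdorff,
totally disconnected), the faces and degeneracies are continuous, and `G'` acts
continuously by simplicial automorphisms. -/
structure SimplicialProfiniteGSet (G' : Type) [Group G'] [TopologicalSpace G'] where
  /-- The profinite set of `n`-simplices. -/
  Y : ℕ → Type
  topY : ∀ n, TopologicalSpace (Y n)
  cptY : ∀ n, CompactSpace (Y n)
  t2Y : ∀ n, T2Space (Y n)
  tdY : ∀ n, TotallyDisconnectedSpace (Y n)
  face : ∀ n, Fin (n + 2) → Y (n + 1) → Y n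
  degen : ∀ n, Fin (n + 1) → Y n → Y (n + 1)
  face_cont : ∀ n i, Continuous (face n i)
  degen_cont : ∀ n i, Continuous (degen n i)
  smul : ∀ n, G' → Y n → Y n
  one_smul : ∀ n y, smul n 1 y = y
  mul_smul : ∀ n g h y, smul n (g * h) y = smul n g (smul n h y)
  smul_cont : ∀ n, Continuous fun p : G' × Y n => smul n p.1 p.2
  face_smul : ∀ n i g y, face n i (smul (n + 1) g y) = smul n g (face n i y)
  degen_smul : ∀ n i g y, degen n i (smul n g y) = smul (n + 1) g (degen n i y)

attribute [instance] SimplicialProfiniteGSet.topY SimplicialProfiniteGSet.cptY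
  SimplicialProfiniteGSet.t2Y SimplicialProfiniteGSet.tdY

section Completion

variable {G : Type} [Group G] {G' : Type} [Group G'] [TopologicalSpace G']
  (φ : G →* G') (M : SimplicialGSet G)

/-- The open subgroups of `G'`; the subgroups `G^λ ≤ G` of the tower defining the
completion are their preimages under `φ`. -/
def OpenSubgroups (G' : Type) [Group G'] [TopologicalSpace G'] : Type :=
  { U : Subgroup G' // IsOpen (U : Set G') }

/-- Two `n`-simplices are identified at level `U` if they differ by the action of an
element of `G^λ = φ⁻¹(U)`. -/
def levelRel (U : OpenSubgroups G') (n : ℕ) (x y : M.X n) : Prop :=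
  ∃ g : G, φ g ∈ U.1 ∧ M.smul n g x = y

/-- The quotient `X_n / G^λ` at level `U`. -/
def LevelQuot (U : OpenSubgroups G') (n : ℕ) : Type :=
  Quot (levelRel φ M U n)

instance (U : OpenSubgroups G') (n : ℕ) : TopologicalSpace (LevelQuot φ M U n) := ⊥

/-- The transition map `X_n / G^λ → X_n / G^μ` for `U ≤ V`. -/
def levelTrans {U V : OpenSubgroups G'} (h : U.1 ≤ V.1) (n : ℕ) :
    LevelQuot φ M U n → LevelQuot φ M V n :=
  Quot.lift (Quot.mk _) fun a b hab => by
    obtain ⟨g, hg, hs⟩ := hab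
    exact Quot.sound ⟨g, h hg, hs⟩

/-- The `G'`-completion `X'_• = lim_λ X_•/G^λ` of the simplicial `G`-set `X_•`:
in each degree, the inverse limit of the quotients of `X_n` by the subgroups
`G^λ = φ⁻¹(U)`, `U` an open subgroup of `G'`. -/
def CompletionX (n : ℕ) : Type :=
  { f : ∀ U : OpenSubgroups G', LevelQuot φ M U n //
      ∀ (U V : OpenSubgroups G') (h : U.1 ≤ V.1), levelTrans φ M h n (f U) = f V }

instance (n : ℕ) : TopologicalSpace (CompletionX φ M n) :=
  instTopologicalSpaceSubtype

/-- The canonical map `X_• → X'_•`. -/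
def toCompletion (n : ℕ) (x : M.X n) : CompletionX φ M n :=
  ⟨fun U => Quot.mk _ x, fun _ _ _ => rfl⟩

end Completion

/-!
Each level `X_n / G^λ` is finite: `φ⁻¹ U` has finite index in `G` and `X_n` has finitely many
`G`-orbits. So `X'_n` is a closed subset of a product of finite discrete sets, hence profinite.

An element `γ ∈ G'` acts at level `U` through any `g ∈ G` with `φ g ∈ U γ` (these exist by
density), which sends the level `γ⁻¹ U γ` to the level `U`. This is locally constant in `(γ, y)`,
so the action is continuous, and the remaining identities hold because they hold on the dense
image of `G × X_n` in `G' × X'_n`.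

A `G`-map `f : X_n → Y_n` extends by sending `y` to the common point of the closures of the images
of its level fibres. Each of these closures lies in a single orbit `U • f x₀`, and in a profinite
group the open subgroups intersect in `1`, so the common point is unique; the same compactness
argument shows that the extension is continuous.
-/

open Topology Filter MulAction

section Actions

variable {G : Type} [Group G] {G' : Type} [Group G'] [TopologicalSpace G']

instance SimplicialGSet.instMulAction (M : SimplicialGSet G) (n : ℕ) : MulAction G (M.X n) where
  smul := M.smul n
  one_smul := M.one_smul n
  mul_smul := M.mul_smul n

instance SimplicialProfiniteGSet.instMulAction (N : SimplicialProfiniteGSet G') (n : ℕ) :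
    MulAction G' (N.Y n) where
  smul := N.smul n
  one_smul := N.one_smul n
  mul_smul := N.mul_smul n

instance SimplicialProfiniteGSet.instContinuousSMul (N : SimplicialProfiniteGSet G') (n : ℕ) :
    ContinuousSMul G' (N.Y n) :=
  ⟨N.smul_cont n⟩

end Actions

namespace OpenSubgroups

variable {G' : Type} [Group G'] [TopologicalSpace G']

instance : SemilatticeInf (OpenSubgroups G') :=
  Subtype.semilatticeInf fun U V hU hV => by rw [Subgroup.coe_inf]; exact hU.inter hV

instance : OrderTop (OpenSubgroups G') :=
  Subtype.orderTop (by rw [Subgroup.coe_top]; exact isOpen_univ)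

def conj [IsTopologicalGroup G'] (γ : G') (U : OpenSubgroups G') : OpenSubgroups G' :=
  ⟨U.1.comap (MulAut.conj γ).toMonoidHom,
    U.2.preimage ((continuous_const_mul γ).mul continuous_const)⟩

theorem mem_conj [IsTopologicalGroup G'] {γ x : G'} {U : OpenSubgroups G'} :
    x ∈ (conj γ U).1 ↔ γ * x * γ⁻¹ ∈ U.1 :=
  Iff.rfl

theorem conj_mono [IsTopologicalGroup G'] (γ : G') {U V : OpenSubgroups G'} (h : U ≤ V) :
    conj γ U ≤ conj γ V :=
  Subgroup.comap_mono h

theorem eq_one_of_forall_mem [IsTopologicalGroup G'] [CompactSpace G']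
    [TotallyDisconnectedSpace G'] {w : G'} (hw : ∀ U : OpenSubgroups G', w ∈ U.1) : w = 1 := by
  by_contra hne
  obtain ⟨C, hC, h1C, hwC⟩ := exists_isClopen_of_totally_separated (Ne.symm hne)
  obtain ⟨H, hH⟩ := IsTopologicalGroup.exist_openSubgroup_sub_clopen_nhds_of_one hC h1C
  exact hwC (hH (hw ⟨H.toSubgroup, H.isOpen⟩))

end OpenSubgroups

theorem eq_of_forall_openSubgroups_exists_smul_eq {G' Y : Type} [Group G'] [TopologicalSpace G']
    [IsTopologicalGroup G'] [CompactSpace G'] [TotallyDisconnectedSpace G'] [TopologicalSpace Y]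
    [T2Space Y] [MulAction G' Y] [ContinuousSMul G' Y] {p q : Y}
    (h : ∀ U : OpenSubgroups G', ∃ w ∈ U.1, w • p = q) : p = q := by
  let K : OpenSubgroups G' → Set G' := fun U => (U.1 : Set G') ∩ {w | w • p = q}
  have hK_closed : ∀ U, IsClosed (K U) := fun U =>
    (U.1.isClosed_of_isOpen U.2).inter (isClosed_eq (continuous_id.smul continuous_const)
      continuous_const)
  have hK_mono : Monotone K := fun U V hUV => Set.inter_subset_inter_left _ hUV
  obtain ⟨w, hw⟩ := IsCompact.nonempty_iInter_of_directed_nonempty_isCompact_isClosed K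
    hK_mono.directed_ge h (fun U => (hK_closed U).isCompact) hK_closed
  have hw1 : w = 1 := OpenSubgroups.eq_one_of_forall_mem fun U => (Set.mem_iInter.mp hw U).1
  rw [← (Set.mem_iInter.mp hw ⊤).2, hw1, one_smul]

section LevelQuot

variable {G : Type} [Group G] {G' : Type} [Group G'] [TopologicalSpace G']
  (φ : G →* G') (M : SimplicialGSet G)

theorem SimplicialGSet.exists_smul_eq_iff_orbitRel (n : ℕ) (x y : M.X n) :
    (∃ g : G, M.smul n g x = y) ↔ orbitRel G (M.X n) x y := by
  rw [orbitRel_apply, mem_orbit_iff]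
  constructor
  · rintro ⟨g, rfl⟩
    exact ⟨g⁻¹, inv_smul_smul g x⟩
  · rintro ⟨g, rfl⟩
    exact ⟨g⁻¹, inv_smul_smul g y⟩

theorem levelRel_iff_orbitRel (U : OpenSubgroups G') (n : ℕ) (x y : M.X n) :
    levelRel φ M U n x y ↔ orbitRel (U.1.comap φ) (M.X n) x y := by
  rw [orbitRel_apply, mem_orbit_iff]
  constructor
  · rintro ⟨g, hg, rfl⟩
    exact ⟨⟨g, hg⟩⁻¹, inv_smul_smul g x⟩
  · rintro ⟨⟨g, hg⟩, rfl⟩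
    exact ⟨g⁻¹, inv_mem hg, inv_smul_smul g y⟩

def levelQuotEquivOrbitRel (U : OpenSubgroups G') (n : ℕ) :
    LevelQuot φ M U n ≃ orbitRel.Quotient (U.1.comap φ) (M.X n) :=
  Quot.congrRight (levelRel_iff_orbitRel φ M U n)

variable {φ M}

theorem levelRel_of_mk_eq {U : OpenSubgroups G'} {n : ℕ} {x y : M.X n}
    (h : (Quot.mk _ x : LevelQuot φ M U n) = Quot.mk _ y) : levelRel φ M U n x y := by
  rw [levelRel_iff_orbitRel]
  exact Quotient.exact ((levelQuotEquivOrbitRel φ M U n).congr_arg h)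

theorem finite_levelQuot [IsTopologicalGroup G'] [CompactSpace G'] {n : ℕ}
    (horb : Finite (Quot fun x y : M.X n => ∃ g : G, M.smul n g x = y)) (U : OpenSubgroups G') :
    Finite (LevelQuot φ M U n) := by
  have : Finite (orbitRel.Quotient G (M.X n)) :=
    (Quot.congrRight fun x y => (M.exists_smul_eq_iff_orbitRel n x y)).finite_iff.mp horb
  have : (U.1.comap φ).FiniteIndex := by
    have := U.1.quotient_finite_of_isOpen U.2
    have : U.1.FiniteIndex := Subgroup.finiteIndex_of_finite_quotient
    rw [Subgroup.finiteIndex_iff, Subgroup.index_comap]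
    exact Subgroup.isFiniteRelIndex_of_finiteIndex.relIndex_ne_zero
  exact (levelQuotEquivOrbitRel φ M U n).finite_iff.mpr inferInstance

instance (U : OpenSubgroups G') (n : ℕ) : DiscreteTopology (LevelQuot φ M U n) :=
  ⟨rfl⟩

@[simp]
theorem levelTrans_mk {U V : OpenSubgroups G'} (h : U.1 ≤ V.1) {n : ℕ} (x : M.X n) :
    levelTrans φ M h n (Quot.mk _ x) = Quot.mk _ x :=
  rfl

end LevelQuot

namespace CompletionX

variable {G : Type} [Group G] {G' : Type} [Group G'] [TopologicalSpace G']
  {φ : G →* G'} {M : SimplicialGSet G}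

theorem continuous_apply_level (n : ℕ) (U : OpenSubgroups G') :
    Continuous fun y : CompletionX φ M n => y.1 U :=
  (continuous_apply U).comp continuous_subtype_val

theorem isOpen_setOf_apply_level_eq {n : ℕ} (U : OpenSubgroups G') (q : LevelQuot φ M U n) :
    IsOpen {y : CompletionX φ M n | y.1 U = q} :=
  (isOpen_discrete {q}).preimage (continuous_apply_level n U)

theorem continuous_of_continuous_apply_level {Z : Type} [TopologicalSpace Z] {n : ℕ}
    {F : Z → CompletionX φ M n} (hF : ∀ U, Continuous fun z => (F z).1 U) : Continuous F :=
  (continuous_pi hF).subtype_mk _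

theorem exists_mk_eq {n : ℕ} (y : CompletionX φ M n) (U : OpenSubgroups G') :
    ∃ x, Quot.mk _ x = y.1 U :=
  Quot.exists_rep (y.1 U)

theorem apply_level_of_le {n : ℕ} (y : CompletionX φ M n) {U V : OpenSubgroups G'} (h : U ≤ V)
    {x : M.X n} (hx : y.1 U = Quot.mk _ x) : y.1 V = Quot.mk _ x := by
  rw [← y.2 U V h, hx, levelTrans_mk]

theorem denseRange_toCompletion (n : ℕ) : DenseRange (toCompletion φ M n) := by
  intro y
  refine mem_closure_of_tendsto (f := fun U => toCompletion φ M n (y.1 U).out) (b := atBot) ?_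
    (Eventually.of_forall fun U => Set.mem_range_self _)
  refine tendsto_subtype_rng.mpr (tendsto_pi_nhds.mpr fun V => tendsto_const_nhds.congr' ?_)
  filter_upwards [eventually_le_atBot V] with U hUV
  exact apply_level_of_le y hUV (Quot.out_eq _).symm

theorem isClosed_setOf_compatible (n : ℕ) :
    IsClosed {f : ∀ U : OpenSubgroups G', LevelQuot φ M U n |
      ∀ (U V : OpenSubgroups G') (h : U.1 ≤ V.1), levelTrans φ M h n (f U) = f V} := by
  simp only [Set.ofPred_forall]
  exact isClosed_iInter fun U => isClosed_iInter fun V => isClosed_iInter fun _ =>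
    isClosed_eq (continuous_of_discreteTopology.comp (continuous_apply U)) (continuous_apply V)

instance (n : ℕ) : T2Space (CompletionX φ M n) :=
  inferInstanceAs (T2Space (Subtype _))

instance (n : ℕ) : TotallyDisconnectedSpace (CompletionX φ M n) :=
  inferInstanceAs (TotallyDisconnectedSpace (Subtype _))

theorem compactSpace [IsTopologicalGroup G'] [CompactSpace G'] {n : ℕ}
    (horb : Finite (Quot fun x y : M.X n => ∃ g : G, M.smul n g x = y)) :
    CompactSpace (CompletionX φ M n) :=
  have := finite_levelQuot (φ := φ) horb
  (isClosed_setOf_compatible n).isClosedEmbedding_subtypeVal.compactSpace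

def map {n k : ℕ} (f : M.X n → M.X k) (hf : ∀ g x, f (M.smul n g x) = M.smul k g (f x))
    (y : CompletionX φ M n) : CompletionX φ M k :=
  ⟨fun U => Quot.map f (fun _ _ ⟨g, hg, h⟩ => ⟨g, hg, by rw [← h, hf]⟩) (y.1 U),
    fun U V h => by dsimp only; rw [← y.2 U V h]; exact Quot.inductionOn (y.1 U) fun _ => rfl⟩

theorem continuous_map {n k : ℕ} (f : M.X n → M.X k)
    (hf : ∀ g x, f (M.smul n g x) = M.smul k g (f x)) : Continuous (map (φ := φ) f hf) :=
  continuous_of_continuous_apply_level fun U =>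
    continuous_of_discreteTopology.comp (continuous_apply_level n U)

theorem map_toCompletion {n k : ℕ} (f : M.X n → M.X k)
    (hf : ∀ g x, f (M.smul n g x) = M.smul k g (f x)) (x : M.X n) :
    map f hf (toCompletion φ M n x) = toCompletion φ M k (f x) :=
  rfl

def face (n : ℕ) (i : Fin (n + 2)) : CompletionX φ M (n + 1) → CompletionX φ M n :=
  map (M.face n i) (M.face_smul n i)

def degen (n : ℕ) (i : Fin (n + 1)) : CompletionX φ M n → CompletionX φ M (n + 1) :=
  map (M.degen n i) (M.degen_smul n i)

section Action

open OpenSubgroups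

theorem mk_smul_eq_mk_smul {U : OpenSubgroups G'} {n : ℕ} {γ : G'} {g g' : G}
    (hg : φ g * γ⁻¹ ∈ U.1) (hg' : φ g' * γ⁻¹ ∈ U.1) (x : M.X n) :
    (Quot.mk _ (M.smul n g x) : LevelQuot φ M U n) = Quot.mk _ (M.smul n g' x) := by
  refine Quot.sound ⟨g' * g⁻¹, ?_, by rw [← M.mul_smul, inv_mul_cancel_right]⟩
  have : φ (g' * g⁻¹) = (φ g' * γ⁻¹) * (φ g * γ⁻¹)⁻¹ := by simp only [map_mul, map_inv]; group
  rw [this]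
  exact mul_mem hg' (inv_mem hg)

variable [IsTopologicalGroup G']

theorem exists_mul_inv_mem (hdense : DenseRange φ) (γ : G') (U : OpenSubgroups G') :
    ∃ g, φ g * γ⁻¹ ∈ U.1 :=
  hdense.exists_mem_open (U.2.preimage (continuous_mul_const γ⁻¹)) ⟨γ, by simp [U.1.one_mem]⟩

noncomputable def approx (hdense : DenseRange φ) (γ : G') (U : OpenSubgroups G') : G :=
  (exists_mul_inv_mem hdense γ U).choose

theorem approx_spec (hdense : DenseRange φ) (γ : G') (U : OpenSubgroups G') :
    φ (approx hdense γ U) * γ⁻¹ ∈ U.1 :=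
  (exists_mul_inv_mem hdense γ U).choose_spec

noncomputable def smulLevel (hdense : DenseRange φ) {n : ℕ} (γ : G') (y : CompletionX φ M n)
    (U : OpenSubgroups G') : LevelQuot φ M U n :=
  Quot.lift (fun x => Quot.mk _ (M.smul n (approx hdense γ U) x))
    (fun x _ ⟨k, hk, hkx⟩ => by
      set a := approx hdense γ U
      refine Quot.sound ⟨a * k * a⁻¹, ?_, by rw [← hkx, ← M.mul_smul, ← M.mul_smul,
        inv_mul_cancel_right]⟩
      have : φ (a * k * a⁻¹) = (φ a * γ⁻¹) * (γ * φ k * γ⁻¹) * (φ a * γ⁻¹)⁻¹ := by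
        simp only [map_mul, map_inv]; group
      rw [this]
      exact mul_mem (mul_mem (approx_spec hdense γ U) hk) (inv_mem (approx_spec hdense γ U)))
    (y.1 (conj γ U))

theorem smulLevel_eq (hdense : DenseRange φ) {n : ℕ} {γ : G'} {y : CompletionX φ M n}
    {U W : OpenSubgroups G'} (hW : W ≤ conj γ U) {x : M.X n} (hx : y.1 W = Quot.mk _ x) {g : G}
    (hg : φ g * γ⁻¹ ∈ U.1) : smulLevel hdense γ y U = Quot.mk _ (M.smul n g x) := by
  rw [smulLevel, apply_level_of_le y hW hx]
  exact mk_smul_eq_mk_smul (approx_spec hdense γ U) hg x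

noncomputable def smul (hdense : DenseRange φ) (n : ℕ) (γ : G') (y : CompletionX φ M n) :
    CompletionX φ M n :=
  ⟨smulLevel hdense γ y, fun U V h => by
    obtain ⟨x, hx⟩ := exists_mk_eq y (conj γ U)
    rw [smulLevel_eq hdense le_rfl hx.symm (approx_spec hdense γ U),
      smulLevel_eq hdense (conj_mono γ h) hx.symm (h (approx_spec hdense γ U)), levelTrans_mk]⟩

theorem smul_apply {hdense : DenseRange φ} {n : ℕ} {γ : G'} {y : CompletionX φ M n}
    {U W : OpenSubgroups G'} (hW : W ≤ conj γ U) {x : M.X n} (hx : y.1 W = Quot.mk _ x) {g : G}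
    (hg : φ g * γ⁻¹ ∈ U.1) : (smul hdense n γ y).1 U = Quot.mk _ (M.smul n g x) :=
  smulLevel_eq hdense hW hx hg

theorem smul_toCompletion (hdense : DenseRange φ) (n : ℕ) (g : G) (x : M.X n) :
    smul hdense n (φ g) (toCompletion φ M n x) = toCompletion φ M n (M.smul n g x) :=
  Subtype.ext <| funext fun U =>
    smul_apply le_rfl rfl (by rw [mul_inv_cancel]; exact U.1.one_mem)

theorem conj_le_conj {γ γ₀ : G'} {U : OpenSubgroups G'} (h : γ * γ₀⁻¹ ∈ U.1) :
    conj γ₀ U ≤ conj γ U := fun x hx => by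
  have : γ * x * γ⁻¹ = (γ * γ₀⁻¹) * (γ₀ * x * γ₀⁻¹) * (γ * γ₀⁻¹)⁻¹ := by group
  rw [mem_conj, this]
  exact mul_mem (mul_mem h hx) (inv_mem h)

/-- Each level of the action is locally constant: near `(γ₀, y₀)` it is computed by the same
approximation of `γ₀` and the same representative of `y₀`. -/
theorem continuous_smul (hdense : DenseRange φ) (n : ℕ) :
    Continuous fun p : G' × CompletionX φ M n => smul hdense n p.1 p.2 := by
  refine continuous_of_continuous_apply_level fun U => IsLocallyConstant.continuous <|
    (IsLocallyConstant.iff_eventually_eq _).mpr fun p₀ => ?_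
  obtain ⟨γ₀, y₀⟩ := p₀
  obtain ⟨x₀, hx₀⟩ := exists_mk_eq y₀ (conj γ₀ U)
  have hg₀ := approx_spec hdense γ₀ U
  have hnhds : {γ : G' | γ * γ₀⁻¹ ∈ U.1} ×ˢ {y | y.1 (conj γ₀ U) = y₀.1 (conj γ₀ U)} ∈
      𝓝 (γ₀, y₀) :=
    ((U.2.preimage (continuous_mul_const γ₀⁻¹)).prod (isOpen_setOf_apply_level_eq _ _)).mem_nhds
      ⟨by simp [U.1.one_mem], rfl⟩
  filter_upwards [hnhds] with ⟨γ, y⟩ ⟨hγ, hy⟩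
  have hg : φ (approx hdense γ₀ U) * γ⁻¹ ∈ U.1 := by
    have : φ (approx hdense γ₀ U) * γ⁻¹ = (φ (approx hdense γ₀ U) * γ₀⁻¹) * (γ * γ₀⁻¹)⁻¹ := by
      group
    rw [this]
    exact mul_mem hg₀ (inv_mem hγ)
  rw [smul_apply (conj_le_conj hγ) (hy.trans hx₀.symm) hg, smul_apply le_rfl hx₀.symm hg₀]

theorem smul_one (hdense : DenseRange φ) (n : ℕ) (y : CompletionX φ M n) :
    smul hdense n 1 y = y := by
  refine congrFun ((denseRange_toCompletion n).equalizer
    ((continuous_smul hdense n).comp (continuous_const.prodMk continuous_id)) continuous_id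
    (funext fun x => ?_)) y
  simp only [Function.comp_apply, id_eq]
  rw [← map_one φ, smul_toCompletion, M.one_smul]

theorem smul_mul (hdense : DenseRange φ) (n : ℕ) (γ δ : G') (y : CompletionX φ M n) :
    smul hdense n (γ * δ) y = smul hdense n γ (smul hdense n δ y) := by
  refine congrFun ((hdense.prodMap (hdense.prodMap (denseRange_toCompletion n))).equalizer
    (g := fun p : G' × G' × CompletionX φ M n => smul hdense n (p.1 * p.2.1) p.2.2)
    (h := fun p => smul hdense n p.1 (smul hdense n p.2.1 p.2.2))
    ((continuous_smul hdense n).comp ((continuous_fst.mul continuous_snd.fst).prodMk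
      continuous_snd.snd))
    ((continuous_smul hdense n).comp (continuous_fst.prodMk
      ((continuous_smul hdense n).comp continuous_snd)))
    (funext fun ⟨g, h, x⟩ => ?_)) (γ, δ, y)
  simp only [Function.comp_apply, Prod.map_apply]
  rw [← map_mul, smul_toCompletion, smul_toCompletion, smul_toCompletion, M.mul_smul]

theorem map_smul (hdense : DenseRange φ) {n k : ℕ} (f : M.X n → M.X k)
    (hf : ∀ g x, f (M.smul n g x) = M.smul k g (f x)) (γ : G') (y : CompletionX φ M n) :
    map f hf (smul hdense n γ y) = smul hdense k γ (map f hf y) := by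
  refine congrFun ((hdense.prodMap (denseRange_toCompletion n)).equalizer
    (g := fun p : G' × CompletionX φ M n => map f hf (smul hdense n p.1 p.2))
    (h := fun p => smul hdense k p.1 (map f hf p.2))
    ((continuous_map f hf).comp (continuous_smul hdense n))
    ((continuous_smul hdense k).comp (continuous_fst.prodMk
      ((continuous_map f hf).comp continuous_snd)))
    (funext fun ⟨g, x⟩ => ?_)) (γ, y)
  simp only [Function.comp_apply, Prod.map_apply]
  rw [smul_toCompletion, map_toCompletion, map_toCompletion, smul_toCompletion, hf]

end Action

section Extension

variable {Y : Type} {n : ℕ}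

def fibreImage (fm : M.X n → Y) (y : CompletionX φ M n) (U : OpenSubgroups G') : Set Y :=
  fm '' {x | Quot.mk _ x = y.1 U}

theorem fibreImage_nonempty (fm : M.X n → Y) (y : CompletionX φ M n) (U : OpenSubgroups G') :
    (fibreImage fm y U).Nonempty :=
  let ⟨x, hx⟩ := exists_mk_eq y U
  ⟨fm x, x, hx, rfl⟩

theorem monotone_fibreImage (fm : M.X n → Y) (y : CompletionX φ M n) :
    Monotone (fibreImage fm y) := by
  rintro U V hUV _ ⟨x, hx, rfl⟩
  exact ⟨x, (apply_level_of_le y hUV hx.symm).symm, rfl⟩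

theorem fibreImage_congr (fm : M.X n → Y) {y y' : CompletionX φ M n} {U : OpenSubgroups G'}
    (h : y.1 U = y'.1 U) : fibreImage fm y U = fibreImage fm y' U := by
  rw [fibreImage, h, fibreImage]

variable [TopologicalSpace Y]

theorem directed_closure_fibreImage (fm : M.X n → Y) (y : CompletionX φ M n) :
    Directed (· ⊇ ·) fun U => closure (fibreImage fm y U) :=
  Monotone.directed_ge fun _ _ h => closure_mono (monotone_fibreImage fm y h)

section Orbit

variable [IsTopologicalGroup G'] [CompactSpace G'] [T2Space Y] [MulAction G' Y]
  [ContinuousSMul G' Y]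

theorem closure_fibreImage_subset_orbit {fm : M.X n → Y}
    (hfm : ∀ g x, fm (M.smul n g x) = φ g • fm x) {y : CompletionX φ M n}
    {U : OpenSubgroups G'} {x₀ : M.X n} (hx₀ : Quot.mk _ x₀ = y.1 U) :
    closure (fibreImage fm y U) ⊆ (· • fm x₀) '' (U.1 : Set G') := by
  refine closure_minimal ?_ ((U.1.isClosed_of_isOpen U.2).isCompact.image
    (continuous_id.smul continuous_const : Continuous fun γ : G' => γ • fm x₀)).isClosed
  rintro _ ⟨x, hx, rfl⟩
  obtain ⟨k, hk, rfl⟩ := levelRel_of_mk_eq (hx₀.trans hx.symm)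
  exact ⟨φ k, hk, (hfm k x₀).symm⟩

theorem eq_of_forall_mem_closure_fibreImage [TotallyDisconnectedSpace G'] {fm : M.X n → Y}
    (hfm : ∀ g x, fm (M.smul n g x) = φ g • fm x) {y : CompletionX φ M n} {p q : Y}
    (hp : ∀ U, p ∈ closure (fibreImage fm y U)) (hq : ∀ U, q ∈ closure (fibreImage fm y U)) :
    p = q := by
  refine eq_of_forall_openSubgroups_exists_smul_eq (G' := G') fun U => ?_
  obtain ⟨x₀, hx₀⟩ := exists_mk_eq y U
  obtain ⟨u, hu, rfl⟩ := closure_fibreImage_subset_orbit hfm hx₀ (hp U)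
  obtain ⟨v, hv, rfl⟩ := closure_fibreImage_subset_orbit hfm hx₀ (hq U)
  exact ⟨v * u⁻¹, mul_mem hv (inv_mem hu), by rw [smul_smul, inv_mul_cancel_right]⟩

end Orbit

variable [CompactSpace Y]

theorem nonempty_iInter_closure_fibreImage (fm : M.X n → Y) (y : CompletionX φ M n) :
    (⋂ U, closure (fibreImage fm y U)).Nonempty :=
  IsCompact.nonempty_iInter_of_directed_nonempty_isCompact_isClosed _
    (directed_closure_fibreImage fm y) (fun U => (fibreImage_nonempty fm y U).closure)
    (fun _ => isClosed_closure.isCompact) (fun _ => isClosed_closure)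

/-- Some common point of the closures; it is unique when `fm` is equivariant (`eq_extend`). -/
noncomputable def extend (fm : M.X n → Y) (y : CompletionX φ M n) : Y :=
  (nonempty_iInter_closure_fibreImage fm y).some

theorem extend_mem_closure (fm : M.X n → Y) (y : CompletionX φ M n) (U : OpenSubgroups G') :
    extend fm y ∈ closure (fibreImage fm y U) :=
  Set.mem_iInter.mp (nonempty_iInter_closure_fibreImage fm y).some_mem U

variable [IsTopologicalGroup G'] [CompactSpace G'] [TotallyDisconnectedSpace G'] [T2Space Y]
  [MulAction G' Y] [ContinuousSMul G' Y]

theorem eq_extend {fm : M.X n → Y} (hfm : ∀ g x, fm (M.smul n g x) = φ g • fm x)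
    {y : CompletionX φ M n} {p : Y} (hp : ∀ U, p ∈ closure (fibreImage fm y U)) :
    p = extend fm y :=
  eq_of_forall_mem_closure_fibreImage hfm hp (extend_mem_closure fm y)

theorem extend_toCompletion {fm : M.X n → Y} (hfm : ∀ g x, fm (M.smul n g x) = φ g • fm x)
    (x : M.X n) : extend fm (toCompletion φ M n x) = fm x :=
  (eq_extend (y := toCompletion φ M n x) hfm fun _ => subset_closure ⟨x, rfl, rfl⟩).symm

theorem continuous_extend {fm : M.X n → Y} (hfm : ∀ g x, fm (M.smul n g x) = φ g • fm x) :
    Continuous (extend (φ := φ) fm) := by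
  refine continuous_iff_continuousAt.mpr fun y => continuousAt_def.mpr fun W hW => ?_
  obtain ⟨U, hU⟩ := exists_subset_nhds_of_isCompact (directed_closure_fibreImage fm y)
    (fun _ => isClosed_closure.isCompact)
    (fun p hp => by rwa [eq_extend hfm (Set.mem_iInter.mp hp)])
  filter_upwards [(isOpen_setOf_apply_level_eq U (y.1 U)).mem_nhds rfl] with y' hy'
  exact hU (fibreImage_congr fm hy' ▸ extend_mem_closure fm y' U)

theorem extend_smul {fm : M.X n → Y} (hfm : ∀ g x, fm (M.smul n g x) = φ g • fm x)
    (hdense : DenseRange φ) (γ : G') (y : CompletionX φ M n) :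
    extend fm (smul hdense n γ y) = γ • extend fm y := by
  refine congrFun ((hdense.prodMap (denseRange_toCompletion n)).equalizer
    (g := fun p : G' × CompletionX φ M n => extend fm (smul hdense n p.1 p.2))
    (h := fun p => p.1 • extend fm p.2)
    ((continuous_extend hfm).comp (continuous_smul hdense n))
    (continuous_fst.smul ((continuous_extend hfm).comp continuous_snd))
    (funext fun ⟨g, x⟩ => ?_)) (γ, y)
  simp only [Function.comp_apply, Prod.map_apply]
  rw [smul_toCompletion, extend_toCompletion hfm, extend_toCompletion hfm, hfm]

end Extension

variable [IsTopologicalGroup G'] [CompactSpace G'] [TotallyDisconnectedSpace G']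

theorem extend_map (N : SimplicialProfiniteGSet G') {n k : ℕ} {fn : M.X n → N.Y n}
    {fk : M.X k → N.Y k} (hfn : ∀ g x, fn (M.smul n g x) = N.smul n (φ g) (fn x))
    (hfk : ∀ g x, fk (M.smul k g x) = N.smul k (φ g) (fk x)) (f : M.X n → M.X k)
    (hf : ∀ g x, f (M.smul n g x) = M.smul k g (f x)) {F : N.Y n → N.Y k} (hF : Continuous F)
    (hfF : ∀ x, fk (f x) = F (fn x)) (y : CompletionX φ M n) :
    extend fk (map f hf y) = F (extend fn y) := by
  refine congrFun ((denseRange_toCompletion n).equalizer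
    ((continuous_extend hfk).comp (continuous_map f hf))
    (hF.comp (continuous_extend hfn)) (funext fun x => ?_)) y
  simp only [Function.comp_apply]
  rw [map_toCompletion, extend_toCompletion hfk, extend_toCompletion hfn, hfF]

theorem existsUnique_extension (hdense : DenseRange φ) (N : SimplicialProfiniteGSet G')
    (fmap : ∀ n, M.X n → N.Y n)
    (hface : ∀ n i x, fmap n (M.face n i x) = N.face n i (fmap (n + 1) x))
    (hdegen : ∀ n i x, fmap (n + 1) (M.degen n i x) = N.degen n i (fmap n x))
    (hsmul : ∀ n g x, fmap n (M.smul n g x) = N.smul n (φ g) (fmap n x)) :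
    ∃! f' : ∀ n, CompletionX φ M n → N.Y n,
      (∀ n, Continuous (f' n)) ∧
      (∀ n x, f' n (toCompletion φ M n x) = fmap n x) ∧
      (∀ n g y, f' n (smul hdense n g y) = N.smul n g (f' n y)) ∧
      (∀ n i y, f' n (face n i y) = N.face n i (f' (n + 1) y)) ∧
      (∀ n i y, f' (n + 1) (degen n i y) = N.degen n i (f' n y)) := by
  refine ⟨fun n => extend (fmap n), ⟨fun n => continuous_extend (hsmul n),
    fun n => extend_toCompletion (hsmul n), fun n => extend_smul (hsmul n) hdense,
    fun n i => extend_map N (hsmul _) (hsmul _) _ _ (N.face_cont n i) (hface n i),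
    fun n i => extend_map N (hsmul _) (hsmul _) _ _ (N.degen_cont n i) (hdegen n i)⟩, ?_⟩
  rintro f' ⟨hcont, hcomp, -⟩
  funext n
  exact (denseRange_toCompletion n).equalizer (hcont n) (continuous_extend (hsmul n))
    (funext fun x => (hcomp n x).trans (extend_toCompletion (hsmul n) x).symm)

end CompletionX

theorem completion_universal_property_general
    {G : Type} [Group G] {G' : Type} [Group G'] [TopologicalSpace G']
    [IsTopologicalGroup G'] [CompactSpace G'] [TotallyDisconnectedSpace G']
    (φ : G →* G') (hdense : DenseRange φ) (M : SimplicialGSet G)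
    (horb : ∀ n, Finite (Quot fun x y : M.X n => ∃ g : G, M.smul n g x = y)) :
    -- `X'_•` is a simplicial profinite set:
    (∀ n, CompactSpace (CompletionX φ M n) ∧ T2Space (CompletionX φ M n) ∧
      TotallyDisconnectedSpace (CompletionX φ M n)) ∧
    ∃ (face' : ∀ n, Fin (n + 2) → CompletionX φ M (n + 1) → CompletionX φ M n)
      (degen' : ∀ n, Fin (n + 1) → CompletionX φ M n → CompletionX φ M (n + 1))
      (smul' : ∀ n, G' → CompletionX φ M n → CompletionX φ M n),
      -- the structure maps are continuous and extend those of `X_•`: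
      (∀ n i, Continuous (face' n i)) ∧ (∀ n i, Continuous (degen' n i)) ∧
      (∀ n i x, face' n i (toCompletion φ M (n + 1) x) =
        toCompletion φ M n (M.face n i x)) ∧
      (∀ n i x, degen' n i (toCompletion φ M n x) =
        toCompletion φ M (n + 1) (M.degen n i x)) ∧
      -- `G'` acts continuously and geometrically, extending the `G`-action:
      (∀ n x, smul' n 1 x = x) ∧
      (∀ n g h x, smul' n (g * h) x = smul' n g (smul' n h x)) ∧
      (∀ n, Continuous fun p : G' × CompletionX φ M n => smul' n p.1 p.2) ∧
      (∀ n g x, smul' n (φ g) (toCompletion φ M n x) =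
        toCompletion φ M n (M.smul n g x)) ∧
      (∀ n i g x, face' n i (smul' (n + 1) g x) = smul' n g (face' n i x)) ∧
      (∀ n i g x, degen' n i (smul' n g x) = smul' (n + 1) g (degen' n i x)) ∧
      -- the universal property:
      (∀ (N : SimplicialProfiniteGSet G') (fmap : ∀ n, M.X n → N.Y n),
        (∀ n i x, fmap n (M.face n i x) = N.face n i (fmap (n + 1) x)) →
        (∀ n i x, fmap (n + 1) (M.degen n i x) = N.degen n i (fmap n x)) →
        (∀ n g x, fmap n (M.smul n g x) = N.smul n (φ g) (fmap n x)) →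
        ∃! f' : ∀ n, CompletionX φ M n → N.Y n,
          (∀ n, Continuous (f' n)) ∧
          (∀ n x, f' n (toCompletion φ M n x) = fmap n x) ∧
          (∀ n g y, f' n (smul' n g y) = N.smul n g (f' n y)) ∧
          (∀ n i y, f' n (face' n i y) = N.face n i (f' (n + 1) y)) ∧
          (∀ n i y, f' (n + 1) (degen' n i y) = N.degen n i (f' n y))) :=
  ⟨fun n => ⟨CompletionX.compactSpace (horb n), inferInstance, inferInstance⟩,
    CompletionX.face, CompletionX.degen, CompletionX.smul hdense,
    fun _ _ => CompletionX.continuous_map _ _, fun _ _ => CompletionX.continuous_map _ _,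
    fun _ _ => CompletionX.map_toCompletion _ _, fun _ _ => CompletionX.map_toCompletion _ _,
    CompletionX.smul_one hdense, CompletionX.smul_mul hdense, CompletionX.continuous_smul hdense,
    CompletionX.smul_toCompletion hdense,
    fun _ _ => CompletionX.map_smul hdense _ _, fun _ _ => CompletionX.map_smul hdense _ _,
    CompletionX.existsUnique_extension hdense⟩

/-- **Universal property of the `G'`-completion of a simplicial `G`-set.**
Let `G'` be a profinite group, `φ : G → G'` a homomorphism from an abstract group with
dense image, and `X_•` a simplicial `G`-set with finitely many `G`-orbits in each
degree.  Then the completion `X'_• = lim_λ X_•/G^λ` (limit over the preimages `G^λ` of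
the open subgroups of `G'`) is a simplicial profinite set carrying a continuous
geometric `G'`-action compatible with the `G`-action on `X_•`, and every
`G`-equivariant simplicial map from `X_•` to a simplicial profinite set `Y_•` with a
continuous geometric `G'`-action factors uniquely through `X_• → X'_•` via a
continuous `G'`-equivariant simplicial map `X'_• → Y_•`. -/
theorem completion_universal_property
    {G : Type} [Group G] {G' : Type} [Group G'] [TopologicalSpace G']
    [IsTopologicalGroup G'] [CompactSpace G'] [T2Space G'] [TotallyDisconnectedSpace G']
    (φ : G →* G') (hdense : DenseRange φ) (M : SimplicialGSet G)
    (horb : ∀ n, Finite (Quot fun x y : M.X n => ∃ g : G, M.smul n g x = y)) :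
    -- `X'_•` is a simplicial profinite set:
    (∀ n, CompactSpace (CompletionX φ M n) ∧ T2Space (CompletionX φ M n) ∧
      TotallyDisconnectedSpace (CompletionX φ M n)) ∧
    ∃ (face' : ∀ n, Fin (n + 2) → CompletionX φ M (n + 1) → CompletionX φ M n)
      (degen' : ∀ n, Fin (n + 1) → CompletionX φ M n → CompletionX φ M (n + 1))
      (smul' : ∀ n, G' → CompletionX φ M n → CompletionX φ M n),
      -- the structure maps are continuous and extend those of `X_•`:
      (∀ n i, Continuous (face' n i)) ∧ (∀ n i, Continuous (degen' n i)) ∧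
      (∀ n i x, face' n i (toCompletion φ M (n + 1) x) =
        toCompletion φ M n (M.face n i x)) ∧
      (∀ n i x, degen' n i (toCompletion φ M n x) =
        toCompletion φ M (n + 1) (M.degen n i x)) ∧
      -- `G'` acts continuously and geometrically, extending the `G`-action:
      (∀ n x, smul' n 1 x = x) ∧
      (∀ n g h x, smul' n (g * h) x = smul' n g (smul' n h x)) ∧
      (∀ n, Continuous fun p : G' × CompletionX φ M n => smul' n p.1 p.2) ∧
      (∀ n g x, smul' n (φ g) (toCompletion φ M n x) =
        toCompletion φ M n (M.smul n g x)) ∧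
      (∀ n i g x, face' n i (smul' (n + 1) g x) = smul' n g (face' n i x)) ∧
      (∀ n i g x, degen' n i (smul' n g x) = smul' (n + 1) g (degen' n i x)) ∧
      -- the universal property:
      (∀ (N : SimplicialProfiniteGSet G') (fmap : ∀ n, M.X n → N.Y n),
        (∀ n i x, fmap n (M.face n i x) = N.face n i (fmap (n + 1) x)) →
        (∀ n i x, fmap (n + 1) (M.degen n i x) = N.degen n i (fmap n x)) →
        (∀ n g x, fmap n (M.smul n g x) = N.smul n (φ g) (fmap n x)) →
        ∃! f' : ∀ n, CompletionX φ M n → N.Y n,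
          (∀ n, Continuous (f' n)) ∧
          (∀ n x, f' n (toCompletion φ M n x) = fmap n x) ∧
          (∀ n g y, f' n (smul' n g y) = N.smul n g (f' n y)) ∧
          (∀ n i y, f' n (face' n i y) = N.face n i (f' (n + 1) y)) ∧
          (∀ n i y, f' (n + 1) (degen' n i y) = N.degen n i (f' n y))) :=
  completion_universal_property_general φ hdense M horb
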